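/- For integers λ > μ ≥ 0, sequences c, c′ of complex numbers and b, b′ ∈ ℂ, define the operators ŵ(λ,c,b) = Σ_{m≥0} s_m(c) Φ̂_{m−λ} + √2 b Ψ and ŵ(μ,c′,b′) = Σ_{m≥0} s_m(c′) Φ̂_{m−μ} + √2 b′ Ψ on B_D. Then EV_0( ŵ(λ,c,b) ŵ(μ,c′,b′) · 1 ) = (s_λ(c)/√2 − b)(s_μ(c′)/√2 + b′) + Σ_{ℓ=1}^{μ} (−1)^ℓ s_{λ+ℓ}(c) s_{μ−ℓ}(c′) = ρ_{λ,μ}(c,c′;b,b′), where EV_0 assigns to an element of B_D the value at t = 0 of its θ-degree-zero component. -/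

import Mathlib

/- ## Setup: the ring `B = ℂ[t₁,t₃,t₅,…]`, elementary Schur polynomials,
   vertex-operator coefficients, and the BKP bilinear identity. -/

noncomputable section

open MvPolynomial

/-- The polynomial ring `B = ℂ[t₁,t₃,t₅,…]`; variable `i` represents `t_{2i+1}`. -/
abbrev BRing : Type := MvPolynomial ℕ ℂ

/-- The universal elementary Schur polynomials `s_n`, defined by
`exp (∑_{j≥1} t_j z^j) = ∑_{n≥0} s_n(t) z^n`; here the variable `j` (for `j ≥ 1`)
represents `t_j`.  They satisfy `s_0 = 1` and `(n+1) s_{n+1} = ∑_{j=1}^{n+1} j t_j s_{n+1-j}`. -/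
def schurPoly : ℕ → MvPolynomial ℕ ℂ
  | 0 => 1
  | n + 1 =>
      ((n + 1 : ℂ))⁻¹ •
        ∑ j ∈ Finset.range (n + 1),
          ((j + 1 : ℂ)) • (MvPolynomial.X (j + 1) * schurPoly (n - j))
  termination_by n => n
  decreasing_by omega

/-- `s_n(c)` for a complex sequence `c = (c_1, c_2, …)` (the entry `c 0` is ignored). -/
def sC (n : ℕ) (c : ℕ → ℂ) : ℂ := MvPolynomial.eval c (schurPoly n)

/-- `s_n` evaluated on a sequence of elements of `B`. -/
def sB (n : ℕ) (c : ℕ → BRing) : BRing := MvPolynomial.aeval c (schurPoly n)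

/-- The sequence `t̃ = (t₁, 0, t₃, 0, t₅, 0, …)` of elements of `B`. -/
def tTilde : ℕ → BRing := fun j => if j % 2 = 1 then MvPolynomial.X ((j - 1) / 2) else 0

/-- The sequence `t̃ + c` for a constant sequence `c`. -/
def tShift (c : ℕ → ℂ) : ℕ → BRing := fun j => tTilde j + MvPolynomial.C (c j)

/-- `s̃_m = s_m(t̃) ∈ B` for `m ≥ 0`, and `0` for `m < 0`; these are the coefficients of
`exp (∑_{j>0 odd} t_j z^j)`. -/
def sTildeZ (m : ℤ) : BRing :=
  if 0 ≤ m then MvPolynomial.aeval tTilde (schurPoly m.toNat) else 0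

/-- `s_m(-t̃) ∈ B` for `m ≥ 0`, and `0` for `m < 0`; the coefficients of
`exp (-∑_{j>0 odd} t_j z^j)`. -/
def sTildeNegZ (m : ℤ) : BRing :=
  if 0 ≤ m then MvPolynomial.aeval (fun j => -(tTilde j)) (schurPoly m.toNat) else 0

/-- `p(t₁ - 2w, t₃ - (2/3)w³, t₅ - (2/5)w⁵, …)` as a polynomial in `w` (which stands for
`z⁻¹`) over `B`: this is `exp (-2∑_{j>0 odd} (1/j) ∂/∂t_j z^{-j}) p` by Taylor's formula. -/
def shiftMinus (p : BRing) : Polynomial BRing :=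
  MvPolynomial.aeval
    (fun i => Polynomial.C (MvPolynomial.X i) -
      Polynomial.C (MvPolynomial.C ((2 : ℂ) / ((2 * i + 1 : ℕ) : ℂ))) *
        Polynomial.X ^ (2 * i + 1)) p

/-- `p(t₁ + 2w, t₃ + (2/3)w³, …)`, i.e. `exp (2∑_{j>0 odd} (1/j) ∂/∂t_j z^{-j}) p`. -/
def shiftPlus (p : BRing) : Polynomial BRing :=
  MvPolynomial.aeval
    (fun i => Polynomial.C (MvPolynomial.X i) +
      Polynomial.C (MvPolynomial.C ((2 : ℂ) / ((2 * i + 1 : ℕ) : ℂ))) *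
        Polynomial.X ^ (2 * i + 1)) p

/-- The coefficient of `z^m` in
`exp (∑_{j>0 odd} t_j z^j) exp (-2∑_{j>0 odd} (1/j)(∂/∂t_j) z^{-j}) τ`. -/
def leftCoeff (τ : BRing) (m : ℤ) : BRing :=
  ∑ᶠ k : ℕ, sTildeZ (m + k) * (shiftMinus τ).coeff k

/-- The coefficient of `z^m` in
`exp (-∑_{j>0 odd} t_j z^j) exp (2∑_{j>0 odd} (1/j)(∂/∂t_j) z^{-j}) τ`. -/
def rightCoeff (τ : BRing) (m : ℤ) : BRing :=
  ∑ᶠ k : ℕ, sTildeNegZ (m + k) * (shiftPlus τ).coeff k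

/-- `ℂ[t₁,t₃,…] ⊗ ℂ[t'₁,t'₃,…]`, realized as polynomials in two families of variables. -/
abbrev BRing2 : Type := MvPolynomial (ℕ ⊕ ℕ) ℂ

/-- The embedding `p(t) ↦ p(t) ∈ ℂ[t] ⊗ ℂ[t']` on the first factor. -/
def inL : BRing →+* BRing2 := (MvPolynomial.rename Sum.inl).toRingHom

/-- The embedding `p(t') ↦ p(t') ∈ ℂ[t] ⊗ ℂ[t']` on the second factor. -/
def inR : BRing →+* BRing2 := (MvPolynomial.rename Sum.inr).toRingHom

/-- The BKP bilinear identity on `τ ∈ ℂ[t₁,t₃,t₅,…]`: the coefficient of `z⁰` in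
`(exp(∑ t_j z^j) exp(-2∑ (1/j)∂_{t_j} z^{-j}) τ)(t) ·
 (exp(-∑ t'_j z^j) exp(2∑ (1/j)∂_{t'_j} z^{-j}) τ)(t')`
equals `τ(t) τ(t')` (all sums over odd `j > 0`; only finitely many summands below
are nonzero since `τ` is a polynomial). -/
def SatisfiesBKP (τ : BRing) : Prop :=
  ∑ᶠ m : ℤ, inL (leftCoeff τ m) * inR (rightCoeff τ (-m)) = inL τ * inR τ

/-- The MDKP bilinear identity on a pair `(τ₀, τ₁)`. -/
def SatisfiesMDKP (τ₀ τ₁ : BRing) : Prop :=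
  ∑ᶠ m : ℤ, inL (leftCoeff τ₀ m) * inR (rightCoeff τ₁ (-m)) = inL τ₁ * inR τ₀

/-- The condition on a permutation `σ` appearing in the definition of the Pfaffian:
`σ(2i-1) < σ(2i)` for all `i`, and `σ(1) < σ(3) < ⋯` (with 0-based indices here). -/
def pfaffianCond {m : ℕ} (σ : Equiv.Perm (Fin m)) : Prop :=
  (∀ i : Fin (m / 2),
      σ ⟨2 * i.val, by have := i.isLt; omega⟩ < σ ⟨2 * i.val + 1, by have := i.isLt; omega⟩) ∧
  (∀ i j : Fin (m / 2), i < j →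
      σ ⟨2 * i.val, by have := i.isLt; omega⟩ < σ ⟨2 * j.val, by have := j.isLt; omega⟩)

open scoped Classical in
/-- The Pfaffian `Pf(A) = ∑_σ sgn(σ) ∏_i a_{σ(2i-1),σ(2i)}` of a (skew-symmetric) matrix;
it is intended to be used for matrices of even size `m = 2n`. -/
def pfaffian {R : Type*} [CommRing R] {m : ℕ} (A : Matrix (Fin m) (Fin m) R) : R :=
  ∑ σ : Equiv.Perm (Fin m),
    if pfaffianCond σ then
      (Equiv.Perm.sign σ : ℤ) •
        ∏ i : Fin (m / 2),
          A (σ ⟨2 * i.val, by have := i.isLt; omega⟩)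
            (σ ⟨2 * i.val + 1, by have := i.isLt; omega⟩)
    else 0

/-- The skew-symmetric matrix with `(i,j)`-entry `f i j` for `i < j`. -/
def skewOf {R : Type*} [CommRing R] {m : ℕ} (f : Fin m → Fin m → R) :
    Matrix (Fin m) (Fin m) R :=
  Matrix.of fun i j => if i < j then f i j else if j < i then -f j i else 0

/-- `χ_{λ,μ}(c,c') = (1/2) s_λ(c) s_μ(c') + ∑_{ℓ=1}^{μ} (-1)^ℓ s_{λ+ℓ}(c) s_{μ-ℓ}(c')`,
for `λ > μ ≥ 0` and sequences `c, c'` of elements of `B`. -/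
def chiB (l μ : ℕ) (c c' : ℕ → BRing) : BRing :=
  (2 : ℂ)⁻¹ • (sB l c * sB μ c') +
    ∑ ℓ ∈ Finset.Icc 1 μ, ((-1 : ℂ) ^ ℓ) • (sB (l + ℓ) c * sB (μ - ℓ) c')

/-- The skew-symmetric matrix `( χ_{λ_i,λ_j}(t̃+c_i, t̃+c_j) )_{i,j}`. -/
def chiMatrix {m : ℕ} (lam : Fin m → ℕ) (c : Fin m → ℕ → ℂ) :
    Matrix (Fin m) (Fin m) BRing :=
  skewOf fun i j => chiB (lam i) (lam j) (tShift (c i)) (tShift (c j))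

/-- `√2` as a complex number. -/
def sqrt2 : ℂ := (Real.sqrt 2 : ℂ)

/-- `ρ_{λ,μ}(c,c';b,b') = (s_λ(c)/√2 - b)(s_μ(c')/√2 + b')
  + ∑_{ℓ=1}^{μ} (-1)^ℓ s_{λ+ℓ}(c) s_{μ-ℓ}(c')` for `λ > μ ≥ 0`. -/
def rhoB (l μ : ℕ) (c c' : ℕ → BRing) (b b' : ℂ) : BRing :=
  (sqrt2⁻¹ • sB l c - MvPolynomial.C b) * (sqrt2⁻¹ • sB μ c' + MvPolynomial.C b') +
    ∑ ℓ ∈ Finset.Icc 1 μ, ((-1 : ℂ) ^ ℓ) • (sB (l + ℓ) c * sB (μ - ℓ) c')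

/-- `ρ_λ(c;b) = s_λ(c)/√2 + b`. -/
def rho1B (l : ℕ) (c : ℕ → BRing) (b : ℂ) : BRing :=
  sqrt2⁻¹ • sB l c + MvPolynomial.C b

/-- The `2n × 2n` skew-symmetric matrix `( ρ_{λ_i,λ_j}(t̃+c_i, t̃+c_j; b_i, b_j) )_{i,j}`
(for an even number `m = 2n` of rows of `λ`). -/
def rhoMatrixEven {m : ℕ} (lam : Fin m → ℕ) (c : Fin m → ℕ → ℂ) (b : Fin m → ℂ) :
    Matrix (Fin m) (Fin m) BRing :=
  skewOf fun i j => rhoB (lam i) (lam j) (tShift (c i)) (tShift (c j)) (b i) (b j)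

/-- For an odd number `m` of parts `λ_1 > ⋯ > λ_m ≥ 0`, the `(m+1) × (m+1)`
skew-symmetric matrix with rows/columns indexed by `0, 1, …, m`, whose `(0,j)`-entry is
`ρ_{λ_j}(t̃+c_j; b_j)` and whose `(i,j)`-entry for `1 ≤ i < j` is
`ρ_{λ_i,λ_j}(t̃+c_i, t̃+c_j; b_i, b_j)`. -/
def rhoMatrixOdd {m : ℕ} (lam : Fin m → ℕ) (c : Fin m → ℕ → ℂ) (b : Fin m → ℂ) :
    Matrix (Fin (m + 1)) (Fin (m + 1)) BRing :=
  skewOf fun i j =>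
    if i.val = 0 then
      if hj : j.val = 0 then 0
      else
        rho1B (lam ⟨j.val - 1, by have := j.isLt; omega⟩)
          (tShift (c ⟨j.val - 1, by have := j.isLt; omega⟩))
          (b ⟨j.val - 1, by have := j.isLt; omega⟩)
    else
      if hj : j.val = 0 then 0
      else
        rhoB (lam ⟨i.val - 1, by have := i.isLt; omega⟩)
          (lam ⟨j.val - 1, by have := j.isLt; omega⟩)
          (tShift (c ⟨i.val - 1, by have := i.isLt; omega⟩))
          (tShift (c ⟨j.val - 1, by have := j.isLt; omega⟩))
          (b ⟨i.val - 1, by have := i.isLt; omega⟩)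
          (b ⟨j.val - 1, by have := j.isLt; omega⟩)

/-- The DKP tau-function `ρ_λ(t̃; c_1,…,c_k; b_1,…,b_k)` attached to an extended strict
partition `λ` with `k` parts: a Pfaffian of size `k` if `k` is even, and of size `k+1`
(with an extra 0-th row built from the `ρ_{λ_j}`) if `k` is odd. -/
def rhoTau {k : ℕ} (lam : Fin k → ℕ) (c : Fin k → ℕ → ℂ) (b : Fin k → ℂ) : BRing :=
  if k % 2 = 0 then pfaffian (rhoMatrixEven lam c b)
  else pfaffian (rhoMatrixOdd lam c b)

/-- The operators `φ̂_j` (`j ∈ ℤ`) on `B`, defined by the generating series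
`∑_{j∈ℤ} φ̂_j z^{-j} = (1/√2) exp(∑_{k>0 odd} t_k z^k) exp(-∑_{k>0 odd} (2/k) ∂_{t_k} z^{-k})`. -/
def phiHat (j : ℤ) (p : BRing) : BRing :=
  sqrt2⁻¹ • ∑ᶠ k : ℕ, sTildeZ ((k : ℤ) - j) * (shiftMinus p).coeff k

/-- `a : ℤ → ℂ` vanishes for all sufficiently negative indices. -/
def BddBelowSupport (a : ℤ → ℂ) : Prop := ∃ N : ℤ, ∀ j < N, a j = 0

/-- The operator `v = ∑_{j∈ℤ} a_j φ̂_j` on `B` (a finite sum on each polynomial,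
when `a` has support bounded below). -/
def vOp (a : ℤ → ℂ) (p : BRing) : BRing := ∑ᶠ j : ℤ, a j • phiHat j p

/-- Evaluation at `t = 0`, `ev₀ : B → ℂ` (the vacuum expectation value). -/
def ev0 : BRing → ℂ := MvPolynomial.eval (fun _ => 0)

/-- The "`√2` times `φ̂_j`" vertex operator coefficients (without the `1/√2` factor),
used for the type `D` construction. -/
def vertexB (j : ℤ) (p : BRing) : BRing :=
  ∑ᶠ k : ℕ, sTildeZ ((k : ℤ) - j) * (shiftMinus p).coeff k

/-- `B_D = ℂ[θ] ⊗ B` with `θ` a Grassmann variable: the pair `(p₀, p₁)` represents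
`p₀ + θ p₁`. -/
abbrev BD : Type := BRing × BRing

/-- The operators `Φ̂_j` (`j ∈ ℤ`) on `B_D`, defined by
`∑_j Φ̂_j z^{-j} = (1/√2)(θ + ∂/∂θ) exp(∑ t_k z^k) exp(-∑ (2/k) ∂_{t_k} z^{-k})`. -/
def PhiHatD (j : ℤ) (p : BD) : BD :=
  sqrt2⁻¹ • (vertexB j p.2, vertexB j p.1)

/-- `Ψ = (θ - ∂/∂θ)/√2` on `B_D`. -/
def PsiD (p : BD) : BD := sqrt2⁻¹ • (-p.2, p.1)

/-- The type `D` fermions `φ̂_a`, `a ∈ ½ + ℤ`, where the integer `m` encodes the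
half-integer index `a = m + ½`:  `φ̂_{-i-½} = Φ̂_{-i}` and `φ̂_{i+½} = (-1)^i Φ̂_i`
for `i ≥ 1`, `φ̂_{-½} = (Φ̂_0 + Ψ)/√2`, `φ̂_{½} = (Φ̂_0 - Ψ)/√2`. -/
def phiD (m : ℤ) (p : BD) : BD :=
  if m ≤ -2 then PhiHatD (m + 1) p
  else if m = -1 then sqrt2⁻¹ • (PhiHatD 0 p + PsiD p)
  else if m = 0 then sqrt2⁻¹ • (PhiHatD 0 p - PsiD p)
  else ((-1 : ℂ) ^ m) • PhiHatD m p

end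

noncomputable section

/-- The operator `ŵ(λ,c,b) = ∑_{m≥0} s_m(c) Φ̂_{m-λ} + √2 b Ψ` on `B_D`. -/
noncomputable def wHat (l : ℕ) (c : ℕ → ℂ) (b : ℂ) (p : BD) : BD :=
  (∑ᶠ m : ℕ, sC m c • PhiHatD ((m : ℤ) - l) p) + (sqrt2 * b) • PsiD p

/-- `EV₀` assigns to an element of `B_D` the value at `t = 0` of its `θ`-degree-zero
component. -/
noncomputable def EV0 (p : BD) : ℂ := ev0 p.1

/-- `ρ_{λ,μ}(c,c';b,b')` for complex sequences `c, c'` and constants `b, b' ∈ ℂ`. -/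
noncomputable def rhoC (l μ : ℕ) (c c' : ℕ → ℂ) (b b' : ℂ) : ℂ :=
  (sC l c / sqrt2 - b) * (sC μ c' / sqrt2 + b') +
    ∑ ℓ ∈ Finset.Icc 1 μ, (-1 : ℂ) ^ ℓ * (sC (l + ℓ) c * sC (μ - ℓ) c')


section AuxLemmas
open MvPolynomial Polynomial

lemma sqrt2_mul_self : sqrt2 * sqrt2 = 2 := by
  have : Real.sqrt 2 * Real.sqrt 2 = 2 := Real.mul_self_sqrt (by norm_num)
  unfold sqrt2
  rw [← Complex.ofReal_mul, this]
  norm_num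

lemma sqrt2_ne_zero : sqrt2 ≠ 0 := by
  intro h
  have := sqrt2_mul_self
  rw [h] at this
  simp at this

lemma schurPoly_succ (n : ℕ) : schurPoly (n+1) =
    ((n + 1 : ℂ))⁻¹ •
        ∑ j ∈ Finset.range (n + 1),
          ((j + 1 : ℂ)) • (MvPolynomial.X (j + 1) * schurPoly (n - j)) := by
  rw [schurPoly]

lemma aeval_schur_succ {A : Type*} [CommRing A] [Algebra ℂ A] (u : ℕ → A) (n : ℕ) :
    MvPolynomial.aeval u (schurPoly (n+1)) =
      ((n + 1 : ℂ))⁻¹ • ∑ j ∈ Finset.range (n + 1),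
        ((j + 1 : ℂ)) • (u (j + 1) * MvPolynomial.aeval u (schurPoly (n - j))) := by
  rw [schurPoly_succ, map_smul, map_sum]
  congr 1
  refine Finset.sum_congr rfl fun j _ => ?_
  rw [map_smul, map_mul, MvPolynomial.aeval_X]

lemma evens_sum (n : ℕ) :
    ∑ j ∈ Finset.range n, (if j % 2 = 0 then (4:ℂ) else 0) = (4 * ((n+1)/2 : ℕ) : ℂ) := by
  induction n with
  | zero => simp
  | succ n ih =>
    rw [Finset.sum_range_succ, ih]
    rcases Nat.even_or_odd n with h | h
    · rw [if_pos (Nat.even_iff.mp h)]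
      have he := Nat.even_iff.mp h
      have : (n+1+1)/2 = (n+1)/2 + 1 := by omega
      rw [this]
      push_cast
      ring
    · rw [if_neg (by have := Nat.odd_iff.mp h; omega : ¬ n % 2 = 0)]
      have : (n+1+1)/2 = (n+1)/2 := by
        have := Nat.odd_iff.mp h; omega
      rw [this, add_zero]

def vSeq : ℕ → Polynomial ℂ :=
  fun j => if j % 2 = 1 then -(Polynomial.C ((2:ℂ)/(j:ℂ)) * Polynomial.X ^ j) else 0

lemma aeval_vSeq_schur (n : ℕ) :
    MvPolynomial.aeval vSeq (schurPoly n) =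
      if n = 0 then 1 else Polynomial.C (2 * (-1:ℂ)^n) * Polynomial.X ^ n := by
  induction n using Nat.strong_induction_on with
  | _ n ih =>
  match n with
  | 0 => simp [schurPoly]
  | Nat.succ n =>
    rw [aeval_schur_succ, if_neg (Nat.succ_ne_zero n)]
    set w : ℕ → ℂ := fun j =>
      if j % 2 = 0 then (if j = n then 2 else 4) * (-1:ℂ)^(n+1) else 0 with hw
    have hterm : ∀ j ∈ Finset.range (n+1),
        ((j + 1 : ℂ)) • (vSeq (j + 1) * MvPolynomial.aeval vSeq (schurPoly (n - j)))
          = Polynomial.monomial (n+1) (w j) := by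
      intro j hj
      have hjn : j ≤ n := Nat.lt_succ_iff.mp (Finset.mem_range.mp hj)
      have hne : ((j:ℂ) + 1) ≠ 0 := Nat.cast_add_one_ne_zero j
      by_cases hj2 : j % 2 = 0
      · have hv : vSeq (j+1) = -(Polynomial.monomial (j+1) ((2:ℂ)/((j:ℂ)+1))) := by
          rw [vSeq]
          rw [if_pos (by omega)]
          rw [Polynomial.C_mul_X_pow_eq_monomial]
          push_cast
          ring_nf
        by_cases hjn' : j = n
        · subst hjn'
          have h0 : MvPolynomial.aeval vSeq (schurPoly (j - j)) = 1 := by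
            simp [Nat.sub_self, schurPoly]
          rw [h0, hv, mul_one, smul_neg, Polynomial.smul_monomial, hw]
          simp only [if_pos hj2, if_pos rfl]
          rw [← Polynomial.monomial_neg]
          congr 1
          have hodd : (-1:ℂ)^(j+1) = -1 := Odd.neg_one_pow ⟨j/2, by omega⟩
          rw [hodd]
          simp only [if_true, smul_eq_mul, neg_inj]
          field_simp
        · have hlt : n - j < n + 1 := by omega
          have hnz : ¬ (n - j = 0) := by omega
          rw [ih (n - j) hlt, if_neg hnz, hv, Polynomial.C_mul_X_pow_eq_monomial,
            neg_mul, Polynomial.monomial_mul_monomial, smul_neg, Polynomial.smul_monomial,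
            ← Polynomial.monomial_neg, hw]
          simp only [if_pos hj2, if_neg hjn']
          have hexp : j + 1 + (n - j) = n + 1 := by omega
          rw [hexp]
          congr 1
          have hpow : (-1:ℂ)^(n-j) = (-1:ℂ)^n := by
            have h1 : (-1:ℂ)^(n-j) * (-1:ℂ)^j = (-1:ℂ)^n := by
              rw [← pow_add]; congr 1; omega
            have h2 : (-1:ℂ)^j = 1 := Even.neg_one_pow (Nat.even_iff.mpr hj2)
            rw [h2, mul_one] at h1
            exact h1
          rw [hpow, pow_succ]
          simp only [smul_eq_mul]
          field_simp
          ring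
      · have hv : vSeq (j+1) = 0 := by
          rw [vSeq]; rw [if_neg (by omega)]
        rw [hv, zero_mul, smul_zero, hw]
        simp only [if_neg hj2]
        rw [Polynomial.monomial_zero_right]
    rw [Finset.sum_congr rfl hterm, ← map_sum]
    have hsum : ∑ j ∈ Finset.range (n+1), w j = ((n:ℂ)+1) * (2 * (-1:ℂ)^(n+1)) := by
      rw [Finset.sum_range_succ]
      have h1 : ∑ j ∈ Finset.range n, w j
          = (∑ j ∈ Finset.range n, (if j % 2 = 0 then (4:ℂ) else 0)) * (-1:ℂ)^(n+1) := by
        rw [Finset.sum_mul]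
        refine Finset.sum_congr rfl fun j hj => ?_
        have hjn : j ≠ n := by have := Finset.mem_range.mp hj; omega
        rw [hw]
        simp only [if_neg hjn]
        by_cases hj2 : j % 2 = 0 <;> simp [hj2]
      rw [h1, evens_sum]
      have h2 : w n = (if n % 2 = 0 then (2:ℂ) else 0) * (-1:ℂ)^(n+1) := by
        rw [hw]
        by_cases hn2 : n % 2 = 0 <;> simp [hn2]
      rw [h2, ← add_mul]
      have key : (4 * ((n+1)/2 : ℕ) : ℂ) + (if n % 2 = 0 then (2:ℂ) else 0)
          = ((n:ℂ)+1) * 2 := by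
        by_cases hn2 : n % 2 = 0
        · rw [if_pos hn2]
          have h3 : 4 * ((n+1)/2) + 2 = (n+1) * 2 := by omega
          calc (4 * ((n+1)/2 : ℕ) : ℂ) + 2 = ((4*((n+1)/2) + 2 : ℕ) : ℂ) := by push_cast; ring
            _ = (((n+1)*2 : ℕ) : ℂ) := by rw [h3]
            _ = ((n:ℂ)+1)*2 := by push_cast; ring
        · rw [if_neg hn2]
          have h3 : 4 * ((n+1)/2) = (n+1) * 2 := by omega
          calc (4 * ((n+1)/2 : ℕ) : ℂ) + 0 = ((4*((n+1)/2) : ℕ) : ℂ) := by push_cast; ring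
            _ = (((n+1)*2 : ℕ) : ℂ) := by rw [h3]
            _ = ((n:ℂ)+1)*2 := by push_cast; ring
      rw [key]
      ring
    rw [hsum, Polynomial.smul_monomial]
    rw [Polynomial.C_mul_X_pow_eq_monomial]
    congr 1
    have hne : ((n:ℂ)+1) ≠ 0 := Nat.cast_add_one_ne_zero n
    simp only [smul_eq_mul]
    field_simp


lemma eval_zero_schur (n : ℕ) :
    MvPolynomial.eval (fun _ => (0:ℂ)) (schurPoly n) = if n = 0 then 1 else 0 := by
  cases n with
  | zero => simp [schurPoly]
  | succ n =>
    rw [schurPoly_succ]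
    rw [if_neg (Nat.succ_ne_zero n)]
    rw [MvPolynomial.smul_eval, map_sum]
    simp [MvPolynomial.smul_eval]

def Ehom : BRing →ₐ[ℂ] Polynomial ℂ :=
  MvPolynomial.aeval
    (fun i : ℕ => -(Polynomial.C ((2:ℂ) / ((2*i+1 : ℕ):ℂ)) * Polynomial.X ^ (2*i+1)))

lemma sTildeZ_neg {n : ℤ} (h : n < 0) : sTildeZ n = 0 := by
  rw [sTildeZ, if_neg (by omega)]

lemma ev0_eq_aeval (p : BRing) :
    ev0 p = MvPolynomial.aeval (R := ℂ) (fun _ : ℕ => (0:ℂ)) p := by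
  rw [ev0]
  rw [← MvPolynomial.coe_aeval_eq_eval]
  rfl

lemma ev0_sTildeZ (n : ℤ) : ev0 (sTildeZ n) = if n = 0 then 1 else 0 := by
  rcases lt_or_ge n 0 with h | h
  · rw [sTildeZ_neg h, if_neg (by omega)]
    simp [ev0]
  · rw [sTildeZ, if_pos h, ev0_eq_aeval, MvPolynomial.comp_aeval_apply]
    have h1 : (fun i => MvPolynomial.aeval (R := ℂ) (fun _ : ℕ => (0:ℂ)) (tTilde i))
        = fun _ : ℕ => (0:ℂ) := by
      funext i
      rw [tTilde]
      by_cases hi : i % 2 = 1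
      · rw [if_pos hi, MvPolynomial.aeval_X]
      · rw [if_neg hi, map_zero]
    rw [h1]
    have h2 : MvPolynomial.aeval (R := ℂ) (fun _ : ℕ => (0:ℂ)) (schurPoly n.toNat)
        = MvPolynomial.eval (fun _ : ℕ => (0:ℂ)) (schurPoly n.toNat) := by
      rw [← MvPolynomial.coe_aeval_eq_eval]
      rfl
    rw [h2, eval_zero_schur]
    by_cases hn : n = 0
    · rw [if_pos hn, if_pos (by omega)]
    · rw [if_neg hn, if_neg (by omega)]

lemma Ehom_tTilde (j : ℕ) : Ehom (tTilde j) = vSeq j := by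
  rw [tTilde, vSeq]
  by_cases hj : j % 2 = 1
  · rw [if_pos hj, if_pos hj, Ehom, MvPolynomial.aeval_X]
    have h1 : 2 * ((j-1)/2) + 1 = j := by omega
    rw [h1]
  · rw [if_neg hj, if_neg hj, map_zero]

lemma Ehom_sTildeZ (n : ℤ) (h : 0 ≤ n) :
    Ehom (sTildeZ n) = if n.toNat = 0 then 1
      else Polynomial.C (2*(-1:ℂ)^n.toNat) * Polynomial.X ^ n.toNat := by
  rw [sTildeZ, if_pos h, MvPolynomial.comp_aeval_apply,
    show (fun i => Ehom (tTilde i)) = vSeq from funext Ehom_tTilde]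
  exact aeval_vSeq_schur n.toNat

lemma map_ev0_shiftMinus (p : BRing) :
    Polynomial.map (MvPolynomial.eval (fun _ => (0:ℂ))) (shiftMinus p) = Ehom p := by
  induction p using MvPolynomial.induction_on with
  | C a =>
    rw [shiftMinus, Ehom]
    simp [MvPolynomial.aeval_C, Polynomial.algebraMap_apply, MvPolynomial.algebraMap_eq]
  | add p q hp hq =>
    rw [shiftMinus, map_add] at *
    rw [Polynomial.map_add, map_add, ← shiftMinus, ← shiftMinus] at *
    rw [hp, hq]
  | mul_X p i hp =>
    have hmul : shiftMinus (p * MvPolynomial.X i) = shiftMinus p * shiftMinus (MvPolynomial.X i) := by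
      rw [shiftMinus, map_mul]
      rfl
    rw [hmul, Polynomial.map_mul, hp, map_mul]
    congr 1
    rw [shiftMinus, MvPolynomial.aeval_X, Ehom, MvPolynomial.aeval_X]
    rw [Polynomial.map_sub, Polynomial.map_mul, Polynomial.map_pow, Polynomial.map_C,
      Polynomial.map_C, Polynomial.map_X]
    simp

lemma ev0_shiftMinus_coeff (p : BRing) (k : ℕ) :
    ev0 ((shiftMinus p).coeff k) = (Ehom p).coeff k := by
  rw [← map_ev0_shiftMinus, Polynomial.coeff_map]
  rfl

lemma shiftMinus_zero : shiftMinus (0 : BRing) = 0 := by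
  rw [shiftMinus, map_zero]

lemma shiftMinus_one : shiftMinus (1 : BRing) = 1 := by
  rw [shiftMinus, map_one]

lemma vertexB_zero (j : ℤ) : vertexB j (0 : BRing) = 0 := by
  rw [vertexB]
  simp [shiftMinus_zero]

lemma vertexB_one (j : ℤ) : vertexB j (1 : BRing) = sTildeZ (-j) := by
  rw [vertexB, shiftMinus_one]
  rw [finsum_eq_single _ 0 (fun k hk => by
    rw [Polynomial.coeff_one, if_neg (by exact_mod_cast hk), mul_zero])]
  rw [Polynomial.coeff_one, if_pos rfl, mul_one]
  norm_num

lemma vertexB_zero_of_gt (p : BRing) (j : ℤ) (h : ((shiftMinus p).natDegree : ℤ) < j) :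
    vertexB j p = 0 := by
  rw [vertexB]
  apply finsum_eq_zero_of_forall_eq_zero
  intro k
  rcases lt_or_ge ((k:ℤ) - j) 0 with hk | hk
  · rw [sTildeZ_neg hk, zero_mul]
  · have hk2 : (shiftMinus p).natDegree < k := by omega
    rw [Polynomial.coeff_eq_zero_of_natDegree_lt hk2, mul_zero]

lemma ev0_vertexB (p : BRing) (j : ℤ) :
    ev0 (vertexB j p) = if 0 ≤ j then (Ehom p).coeff j.toNat else 0 := by
  set D := (shiftMinus p).natDegree with hD
  set s : Finset ℕ := Finset.range (max (D+1) (j.toNat+1)) with hs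
  have hsupp : Function.support
      (fun k : ℕ => sTildeZ ((k:ℤ) - j) * (shiftMinus p).coeff k) ⊆ (s : Set ℕ) := by
    intro k hk
    simp only [Function.mem_support] at hk
    by_contra hks
    have hk2 : max (D+1) (j.toNat+1) ≤ k := by
      by_contra hc
      push_neg at hc
      exact hks (Finset.mem_range.mpr hc)
    have hk3 : (shiftMinus p).natDegree < k := by omega
    have : (shiftMinus p).coeff k = 0 :=
      Polynomial.coeff_eq_zero_of_natDegree_lt hk3
    rw [this, mul_zero] at hk
    exact hk rfl
  rw [vertexB, finsum_eq_finset_sum_of_support_subset _ hsupp]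
  have hev : ev0 (∑ k ∈ s, sTildeZ ((k:ℤ) - j) * (shiftMinus p).coeff k)
      = ∑ k ∈ s, (if (k:ℤ) - j = 0 then (1:ℂ) else 0) * (Ehom p).coeff k := by
    rw [ev0, map_sum]
    refine Finset.sum_congr rfl fun k _ => ?_
    rw [map_mul]
    rw [show (MvPolynomial.eval fun _ => (0:ℂ)) (sTildeZ ((k:ℤ) - j))
        = if (k:ℤ) - j = 0 then (1:ℂ) else 0 from ev0_sTildeZ _]
    rw [show (MvPolynomial.eval fun _ => (0:ℂ)) ((shiftMinus p).coeff k)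
        = (Ehom p).coeff k from ev0_shiftMinus_coeff p k]
  rw [hev]
  rcases le_or_gt 0 j with hj | hj
  · rw [if_pos hj]
    rw [Finset.sum_eq_single_of_mem j.toNat
      (by simp only [hs, Finset.mem_range]; omega)
      (fun k _ hk => by rw [if_neg (by omega), zero_mul])]
    rw [if_pos (by omega), one_mul]
  · rw [if_neg (by omega)]
    apply Finset.sum_eq_zero
    intro k _
    rw [if_neg (by omega), zero_mul]

lemma ev0_add (x y : BRing) : ev0 (x + y) = ev0 x + ev0 y := by
  rw [ev0, map_add]

lemma ev0_smul (a : ℂ) (x : BRing) : ev0 (a • x) = a * ev0 x := by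
  rw [ev0, MvPolynomial.smul_eval]

lemma ev0_neg (x : BRing) : ev0 (-x) = -(ev0 x) := by
  rw [ev0, map_neg]

lemma ev0_C (a : ℂ) : ev0 (MvPolynomial.C a) = a := by
  rw [ev0, MvPolynomial.eval_C]

lemma ev0_sum {α : Type*} (s : Finset α) (f : α → BRing) :
    ev0 (∑ x ∈ s, f x) = ∑ x ∈ s, ev0 (f x) := by
  rw [ev0, map_sum]

end AuxLemmas

/-- For integers `λ > μ ≥ 0`, sequences `c, c'` of complex numbers and
`b, b' ∈ ℂ`: `EV₀( ŵ(λ,c,b) ŵ(μ,c',b') · 1 ) = (s_λ(c)/√2 - b)(s_μ(c')/√2 + b') +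
∑_{ℓ=1}^{μ} (-1)^ℓ s_{λ+ℓ}(c) s_{μ-ℓ}(c') = ρ_{λ,μ}(c,c';b,b')`. -/
theorem vev_rho (l μ : ℕ) (h : μ < l) (c c' : ℕ → ℂ) (b b' : ℂ) :
    EV0 (wHat l c b (wHat μ c' b' (1, 0))) = rhoC l μ c c' b b' := by
  classical
  have hs2 : sqrt2⁻¹ * sqrt2⁻¹ * 2 = 1 := by
    rw [← sqrt2_mul_self]
    field_simp
    exact div_self sqrt2_ne_zero
  have hinv : sqrt2 * sqrt2⁻¹ = 1 := mul_inv_cancel₀ sqrt2_ne_zero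
  set q : BRing := (∑ m ∈ Finset.range (μ+1), (sqrt2⁻¹ * sC m c') • sTildeZ ((μ:ℤ) - m))
      + MvPolynomial.C b' with hqdef
  -- Step 1: the inner application
  have hinner : wHat μ c' b' ((1:BRing), (0:BRing)) = ((0:BRing), q) := by
    rw [wHat]
    have h1 : ∀ m : ℕ, sC m c' • PhiHatD ((m:ℤ) - μ) ((1:BRing), (0:BRing))
        = ((0:BRing), (sqrt2⁻¹ * sC m c') • sTildeZ ((μ:ℤ) - m)) := by
      intro m
      have hphi : PhiHatD ((m:ℤ) - μ) ((1:BRing), (0:BRing))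
          = sqrt2⁻¹ • ((0:BRing), sTildeZ ((μ:ℤ) - m)) := by
        rw [PhiHatD]
        rw [show ((1:BRing), (0:BRing)).2 = (0:BRing) from rfl]
        rw [show ((1:BRing), (0:BRing)).1 = (1:BRing) from rfl]
        rw [vertexB_zero, vertexB_one]
        rw [show -((m:ℤ) - μ) = (μ:ℤ) - m from by ring]
      rw [hphi, smul_smul, Prod.smul_mk, smul_zero, mul_comm]
    rw [finsum_congr h1]
    have hsupp1 : Function.support
        (fun m : ℕ => ((0:BRing), (sqrt2⁻¹ * sC m c') • sTildeZ ((μ:ℤ) - m)))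
          ⊆ ((Finset.range (μ+1) : Finset ℕ) : Set ℕ) := by
      intro m hm
      simp only [Function.mem_support] at hm
      by_contra hmr
      have hmgt : μ < m := by
        by_contra hc
        exact hmr (Finset.mem_range.mpr (by omega))
      apply hm
      rw [sTildeZ_neg (by omega), smul_zero]
      rfl
    rw [finsum_eq_finset_sum_of_support_subset _ hsupp1]
    have hpsi : PsiD ((1:BRing), (0:BRing)) = ((0:BRing), sqrt2⁻¹ • (1:BRing)) := by
      rw [PsiD]
      rw [show (-((1:BRing), (0:BRing)).2, ((1:BRing), (0:BRing)).1)
          = ((0:BRing), (1:BRing)) from by rw [show ((1:BRing), (0:BRing)).2 = (0:BRing) from rfl]; rw [neg_zero]]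
      rw [Prod.smul_mk, smul_zero]
    rw [hpsi]
    apply Prod.ext
    · simp [Prod.fst_add, Prod.fst_sum]
    · rw [Prod.snd_add, Prod.snd_sum]
      simp only
      rw [hqdef]
      congr 1
      rw [Prod.smul_snd]
      rw [smul_smul]
      rw [show sqrt2 * b' * sqrt2⁻¹ = b' from by rw [mul_comm sqrt2 b', mul_assoc, hinv, mul_one]]
      rw [MvPolynomial.smul_eq_C_mul, mul_one]
  rw [hinner]
  -- ev0 of q
  have hev0q : ev0 q = sqrt2⁻¹ * sC μ c' + b' := by
    rw [hqdef, ev0_add, ev0_sum, ev0_C]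
    congr 1
    have hterm : ∀ m ∈ Finset.range (μ+1),
        ev0 ((sqrt2⁻¹ * sC m c') • sTildeZ ((μ:ℤ) - m))
          = if m = μ then sqrt2⁻¹ * sC μ c' else 0 := by
      intro m hm
      have hmle := Finset.mem_range.mp hm
      rw [ev0_smul, ev0_sTildeZ]
      by_cases hm2 : m = μ
      · subst hm2
        rw [if_pos (by omega), if_pos rfl, mul_one]
      · rw [if_neg (by omega), if_neg hm2, mul_zero]
    rw [Finset.sum_congr rfl hterm, Finset.sum_ite_eq' (Finset.range (μ+1)) μ]
    rw [if_pos (Finset.self_mem_range_succ μ)]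
  -- coefficients of Ehom q
  have hEq : Ehom q = (∑ m ∈ Finset.range (μ+1), (sqrt2⁻¹ * sC m c') •
      (if μ - m = 0 then (1:Polynomial ℂ)
        else Polynomial.C (2*(-1:ℂ)^(μ-m)) * Polynomial.X^(μ-m)))
      + Polynomial.C b' := by
    rw [hqdef, map_add, map_sum]
    congr 1
    · refine Finset.sum_congr rfl fun m hm => ?_
      rw [map_smul]
      congr 1
      have h0 : (0:ℤ) ≤ (μ:ℤ) - m := by have := Finset.mem_range.mp hm; omega
      rw [Ehom_sTildeZ _ h0]
      have h2 : ((μ:ℤ) - m).toNat = μ - m := by omega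
      rw [h2]
    · rw [show (MvPolynomial.C b' : BRing) = algebraMap ℂ BRing b' from rfl,
        AlgHom.commutes]
      simp [Polynomial.algebraMap_apply]
  have hcoeff : ∀ k : ℕ, (Ehom q).coeff k =
      if k = 0 then sqrt2⁻¹ * sC μ c' + b'
      else if k ≤ μ then sqrt2⁻¹ * sC (μ - k) c' * (2 * (-1:ℂ)^k) else 0 := by
    intro k
    rw [hEq, Polynomial.coeff_add, Polynomial.finset_sum_coeff, Polynomial.coeff_C]
    by_cases hk0 : k = 0
    · subst hk0
      rw [if_pos rfl, if_pos rfl]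
      congr 1
      have hterm : ∀ m ∈ Finset.range (μ+1),
          ((sqrt2⁻¹ * sC m c') • (if μ - m = 0 then (1:Polynomial ℂ)
            else Polynomial.C (2*(-1:ℂ)^(μ-m)) * Polynomial.X^(μ-m))).coeff 0
          = if m = μ then sqrt2⁻¹ * sC μ c' else 0 := by
        intro m hm
        have hmle := Finset.mem_range.mp hm
        rw [Polynomial.coeff_smul]
        by_cases hm2 : m = μ
        · subst hm2
          rw [if_pos (Nat.sub_self m), if_pos rfl]
          simp
        · rw [if_neg (by omega : ¬ (μ - m = 0)), if_neg hm2,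
            Polynomial.coeff_C_mul, Polynomial.coeff_X_pow, if_neg (by omega)]
          simp
      rw [Finset.sum_congr rfl hterm, Finset.sum_ite_eq' (Finset.range (μ+1)) μ]
      rw [if_pos (Finset.self_mem_range_succ μ)]
    · rw [if_neg hk0, if_neg hk0, add_zero]
      by_cases hkμ : k ≤ μ
      · rw [if_pos hkμ]
        have hterm : ∀ m ∈ Finset.range (μ+1),
            ((sqrt2⁻¹ * sC m c') • (if μ - m = 0 then (1:Polynomial ℂ)
              else Polynomial.C (2*(-1:ℂ)^(μ-m)) * Polynomial.X^(μ-m))).coeff k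
            = if m = μ - k then sqrt2⁻¹ * sC (μ - k) c' * (2 * (-1:ℂ)^k) else 0 := by
          intro m hm
          have hmle := Finset.mem_range.mp hm
          rw [Polynomial.coeff_smul]
          by_cases hm2 : m = μ - k
          · subst hm2
            rw [if_pos rfl, if_neg (by omega : ¬ (μ - (μ - k) = 0))]
            rw [show μ - (μ - k) = k from by omega,
              Polynomial.coeff_C_mul, Polynomial.coeff_X_pow, if_pos rfl]
            simp only [smul_eq_mul, mul_one]
          · rw [if_neg hm2]
            by_cases hm3 : m = μ
            · subst hm3
              rw [if_pos (Nat.sub_self m), Polynomial.coeff_one, if_neg hk0]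
              simp
            · rw [if_neg (by omega : ¬ (μ - m = 0)),
                Polynomial.coeff_C_mul, Polynomial.coeff_X_pow,
                if_neg (by omega : ¬ (k = μ - m))]
              simp
        rw [Finset.sum_congr rfl hterm, Finset.sum_ite_eq' (Finset.range (μ+1)) (μ - k)]
        rw [if_pos (Finset.mem_range.mpr (by omega))]
      · rw [if_neg hkμ]
        apply Finset.sum_eq_zero
        intro m hm
        have hmle := Finset.mem_range.mp hm
        rw [Polynomial.coeff_smul]
        by_cases hm3 : m = μ
        · subst hm3
          rw [if_pos (Nat.sub_self m), Polynomial.coeff_one, if_neg hk0]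
          simp
        · rw [if_neg (by omega : ¬ (μ - m = 0)),
            Polynomial.coeff_C_mul, Polynomial.coeff_X_pow,
            if_neg (by omega : ¬ (k = μ - m))]
          simp
  -- Step 2: the outer application
  rw [EV0, wHat]
  have h2 : ∀ m : ℕ, sC m c • PhiHatD ((m:ℤ) - l) ((0:BRing), q)
      = ((sqrt2⁻¹ * sC m c) • vertexB ((m:ℤ) - l) q, (0:BRing)) := by
    intro m
    rw [PhiHatD]
    rw [show ((0:BRing), q).2 = q from rfl, show ((0:BRing), q).1 = (0:BRing) from rfl]
    rw [vertexB_zero, smul_smul, Prod.smul_mk, smul_zero, mul_comm]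
  rw [finsum_congr h2]
  set D := (shiftMinus q).natDegree with hDdef
  set M := l + D + μ + 1 with hMdef
  have hgt : ∀ m : ℕ, M ≤ m →
      (((sqrt2⁻¹ * sC m c) • vertexB ((m:ℤ) - l) q, (0:BRing)) : BD) = 0 := by
    intro m hm
    rw [vertexB_zero_of_gt q _ (by omega : ((shiftMinus q).natDegree : ℤ) < (m:ℤ) - l),
      smul_zero]
    rfl
  have hsupp2 : Function.support
      (fun m : ℕ => (((sqrt2⁻¹ * sC m c) • vertexB ((m:ℤ) - l) q, (0:BRing)) : BD))
        ⊆ ((Finset.range M : Finset ℕ) : Set ℕ) := by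
    intro m hm
    simp only [Function.mem_support] at hm
    by_contra hmr
    have hmge : M ≤ m := by
      by_contra hc
      exact hmr (Finset.mem_range.mpr (by omega))
    exact hm (hgt m hmge)
  rw [finsum_eq_finset_sum_of_support_subset _ hsupp2]
  have hpsi2 : PsiD ((0:BRing), q) = (sqrt2⁻¹ • (-q), (0:BRing)) := by
    rw [PsiD, Prod.smul_mk, smul_zero]
  rw [hpsi2]
  rw [Prod.fst_add, Prod.fst_sum]
  simp only [Prod.smul_fst]
  rw [ev0_add, ev0_sum]
  -- evaluate each term
  have h3 : ∀ m ∈ Finset.range M,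
      ev0 ((sqrt2⁻¹ * sC m c) • vertexB ((m:ℤ) - l) q)
        = (sqrt2⁻¹ * sC m c) * (if l ≤ m then
            (if m - l = 0 then sqrt2⁻¹ * sC μ c' + b'
              else if m - l ≤ μ then sqrt2⁻¹ * sC (μ - (m - l)) c' * (2 * (-1:ℂ)^(m-l))
              else 0) else 0) := by
    intro m _
    rw [ev0_smul, ev0_vertexB]
    by_cases hlm : l ≤ m
    · rw [if_pos (by omega : (0:ℤ) ≤ (m:ℤ) - l), if_pos hlm]
      rw [show ((m:ℤ) - l).toNat = m - l from by omega, hcoeff]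
    · rw [if_neg (by omega : ¬ ((0:ℤ) ≤ (m:ℤ) - l)), if_neg hlm]
  rw [Finset.sum_congr rfl h3]
  -- reduce the sum range
  have hsub : ∑ m ∈ Finset.range M, ((sqrt2⁻¹ * sC m c) * (if l ≤ m then
      (if m - l = 0 then sqrt2⁻¹ * sC μ c' + b'
        else if m - l ≤ μ then sqrt2⁻¹ * sC (μ - (m - l)) c' * (2 * (-1:ℂ)^(m-l))
        else 0) else 0))
      = ∑ m ∈ Finset.range (l + (μ+1)), ((sqrt2⁻¹ * sC m c) * (if l ≤ m then
      (if m - l = 0 then sqrt2⁻¹ * sC μ c' + b'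
        else if m - l ≤ μ then sqrt2⁻¹ * sC (μ - (m - l)) c' * (2 * (-1:ℂ)^(m-l))
        else 0) else 0)) := by
    refine (Finset.sum_subset (Finset.range_subset_range.mpr (by omega)) ?_).symm
    intro m _ hms
    have hmge : l + (μ+1) ≤ m := by
      by_contra hc
      exact hms (Finset.mem_range.mpr (by omega))
    rw [if_pos (by omega : l ≤ m), if_neg (by omega : ¬ (m - l = 0)),
      if_neg (by omega : ¬ (m - l ≤ μ)), mul_zero]
  rw [hsub]
  rw [← Finset.sum_range_add_sum_Ico _ (by omega : l ≤ l + (μ+1))]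
  rw [Finset.sum_eq_zero (fun m hm => by
    have := Finset.mem_range.mp hm
    rw [if_neg (by omega : ¬ (l ≤ m)), mul_zero]), zero_add]
  rw [Finset.sum_Ico_eq_sum_range]
  rw [show l + (μ+1) - l = μ + 1 from by omega]
  have h4 : ∀ i ∈ Finset.range (μ+1),
      ((sqrt2⁻¹ * sC (l+i) c) * (if l ≤ l+i then
        (if (l+i) - l = 0 then sqrt2⁻¹ * sC μ c' + b'
          else if (l+i) - l ≤ μ then sqrt2⁻¹ * sC (μ - ((l+i) - l)) c' * (2 * (-1:ℂ)^((l+i)-l))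
          else 0) else 0))
      = (sqrt2⁻¹ * sC (l+i) c) * (if i = 0 then sqrt2⁻¹ * sC μ c' + b'
          else sqrt2⁻¹ * sC (μ - i) c' * (2 * (-1:ℂ)^i)) := by
    intro i hi
    have hile := Finset.mem_range.mp hi
    rw [if_pos (by omega : l ≤ l + i), show (l+i) - l = i from by omega]
    by_cases hi0 : i = 0
    · rw [if_pos hi0, if_pos hi0]
    · rw [if_neg hi0, if_neg hi0, if_pos (by omega : i ≤ μ)]
  rw [Finset.sum_congr rfl h4]
  rw [Finset.sum_range_succ']
  -- right-hand side
  rw [rhoC]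
  have hIcc : ∑ ℓ ∈ Finset.Icc 1 μ, (-1:ℂ)^ℓ * (sC (l+ℓ) c * sC (μ-ℓ) c')
      = ∑ i ∈ Finset.range μ, (-1:ℂ)^(1+i) * (sC (l+(1+i)) c * sC (μ-(1+i)) c') := by
    rw [← Finset.Ico_add_one_right_eq_Icc, Finset.sum_Ico_eq_sum_range,
      show μ + 1 - 1 = μ from rfl]
  rw [hIcc]
  have hsum_eq : ∑ i ∈ Finset.range μ,
      (sqrt2⁻¹ * sC (l+(i+1)) c) * (if i + 1 = 0 then sqrt2⁻¹ * sC μ c' + b'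
        else sqrt2⁻¹ * sC (μ - (i+1)) c' * (2 * (-1:ℂ)^(i+1)))
      = ∑ i ∈ Finset.range μ, (-1:ℂ)^(1+i) * (sC (l+(1+i)) c * sC (μ-(1+i)) c') := by
    refine Finset.sum_congr rfl fun i _ => ?_
    rw [if_neg (Nat.succ_ne_zero i)]
    rw [show 1 + i = i + 1 from by omega]
    linear_combination (sC (l+(i+1)) c * sC (μ-(i+1)) c' * (-1:ℂ)^(i+1)) * hs2
  rw [hsum_eq]
  rw [ev0_smul, ev0_smul, ev0_neg, hev0q]
  rw [if_pos rfl, show l + 0 = l from rfl, div_eq_mul_inv, div_eq_mul_inv]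
  linear_combination (-(b*(sqrt2⁻¹ * sC μ c' + b'))) * hinv

end
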